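/- Let H be a Hopf algebra over k. For Yetter–Drinfel'd modules M, N ∈ ᴴᴴYD with the tensor product structure h·(m ⊗ n) = h₁·m ⊗ h₂·n and δ(m ⊗ n) = m₍₋₁₎n₍₋₁₎ ⊗ (m₍₀₎ ⊗ n₍₀₎), the braiding map σ_{M,N} : M ⊗ N → N ⊗ M given by σ_{M,N}(m ⊗ n) = m₍₋₁₎·n ⊗ m₍₀₎ is a morphism of Yetter–Drinfel'd modules, i.e., it is both left H-linear and left H-colinear. -/
import Mathlib


open TensorProduct Coalgebra

universe u

variable {k H M : Type u} [Field k] [Ring H] [HopfAlgebra k H]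
  [AddCommGroup M] [Module k M]

/-- The left hand side `h ⊗ m ↦ h₁ m₍₋₁₎ ⊗ h₂ · m₍₀₎` of the Yetter–Drinfel'd
compatibility condition, as a linear map `H ⊗ M → H ⊗ M`. -/
noncomputable def ydLHS (act : H ⊗[k] M →ₗ[k] M) (coact : M →ₗ[k] H ⊗[k] M) :
    H ⊗[k] M →ₗ[k] H ⊗[k] M :=
  TensorProduct.map (LinearMap.mul' k H) act
    ∘ₗ (TensorProduct.tensorTensorTensorComm k H H H M).toLinearMap
    ∘ₗ TensorProduct.map (Coalgebra.comul : H →ₗ[k] H ⊗[k] H) coact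

/-- The right hand side `h ⊗ m ↦ (h₁ · m)₍₋₁₎ h₂ ⊗ (h₁ · m)₍₀₎` of the Yetter–Drinfel'd
compatibility condition, as a linear map `H ⊗ M → H ⊗ M`. -/
noncomputable def ydRHS (act : H ⊗[k] M →ₗ[k] M) (coact : M →ₗ[k] H ⊗[k] M) :
    H ⊗[k] M →ₗ[k] H ⊗[k] M :=
  TensorProduct.map (LinearMap.mul' k H ∘ₗ (TensorProduct.comm k H H).toLinearMap) LinearMap.id
    ∘ₗ (TensorProduct.assoc k H H M).symm.toLinearMap
    ∘ₗ TensorProduct.map LinearMap.id (coact ∘ₗ act)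
    ∘ₗ (TensorProduct.assoc k H H M).toLinearMap
    ∘ₗ TensorProduct.map (TensorProduct.comm k H H).toLinearMap LinearMap.id
    ∘ₗ TensorProduct.map (Coalgebra.comul : H →ₗ[k] H ⊗[k] H) LinearMap.id

/-- the diagonal action `h ⊗ (m ⊗ n) ↦ h₁·m ⊗ h₂·n` on a tensor product of `H`-modules. -/
noncomputable def actTensor {N : Type u} [AddCommGroup N] [Module k N]
    (actM : H ⊗[k] M →ₗ[k] M) (actN : H ⊗[k] N →ₗ[k] N) :
    H ⊗[k] (M ⊗[k] N) →ₗ[k] M ⊗[k] N :=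
  TensorProduct.map actM actN
    ∘ₗ (TensorProduct.tensorTensorTensorComm k H H M N).toLinearMap
    ∘ₗ TensorProduct.map (Coalgebra.comul : H →ₗ[k] H ⊗[k] H) LinearMap.id

/-- the codiagonal coaction `m ⊗ n ↦ m₍₋₁₎n₍₋₁₎ ⊗ (m₍₀₎ ⊗ n₍₀₎)` on a tensor product of
`H`-comodules. -/
noncomputable def coactTensor {N : Type u} [AddCommGroup N] [Module k N]
    (coactM : M →ₗ[k] H ⊗[k] M) (coactN : N →ₗ[k] H ⊗[k] N) :
    M ⊗[k] N →ₗ[k] H ⊗[k] (M ⊗[k] N) :=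
  TensorProduct.map (LinearMap.mul' k H) LinearMap.id
    ∘ₗ (TensorProduct.tensorTensorTensorComm k H M H N).toLinearMap
    ∘ₗ TensorProduct.map coactM coactN

/-- the braiding `σ_{M,N}(m ⊗ n) = m₍₋₁₎·n ⊗ m₍₀₎` of the Yetter–Drinfel'd category. -/
noncomputable def ydBraiding {N : Type u} [AddCommGroup N] [Module k N]
    (coactM : M →ₗ[k] H ⊗[k] M) (actN : H ⊗[k] N →ₗ[k] N) :
    M ⊗[k] N →ₗ[k] N ⊗[k] M :=
  TensorProduct.map actN LinearMap.id
    ∘ₗ (TensorProduct.assoc k H N M).symm.toLinearMap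
    ∘ₗ TensorProduct.map LinearMap.id (TensorProduct.comm k M N).toLinearMap
    ∘ₗ (TensorProduct.assoc k H M N).toLinearMap
    ∘ₗ TensorProduct.map coactM LinearMap.id


namespace YDaux

open TensorProduct Coalgebra

variable {N : Type u} [AddCommGroup N] [Module k N]

/-- `(x ⊗ m') ⊗ n ↦ Σ x₁·n ⊗ x₂` for `x ∈ H ⊗ M`. -/
noncomputable def Phi (actN : H ⊗[k] N →ₗ[k] N) :
    (H ⊗[k] M) ⊗[k] N →ₗ[k] N ⊗[k] M :=
  TensorProduct.map actN LinearMap.id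
    ∘ₗ (TensorProduct.assoc k H N M).symm.toLinearMap
    ∘ₗ TensorProduct.map LinearMap.id (TensorProduct.comm k M N).toLinearMap
    ∘ₗ (TensorProduct.assoc k H M N).toLinearMap

/-- `ydLHS` without the initial `comul`. -/
noncomputable def restL (act : H ⊗[k] M →ₗ[k] M) (coact : M →ₗ[k] H ⊗[k] M) :
    (H ⊗[k] H) ⊗[k] M →ₗ[k] H ⊗[k] M :=
  TensorProduct.map (LinearMap.mul' k H) act
    ∘ₗ (TensorProduct.tensorTensorTensorComm k H H H M).toLinearMap
    ∘ₗ TensorProduct.map LinearMap.id coact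

/-- `ydRHS` without the initial `comul`. -/
noncomputable def restR (act : H ⊗[k] M →ₗ[k] M) (coact : M →ₗ[k] H ⊗[k] M) :
    (H ⊗[k] H) ⊗[k] M →ₗ[k] H ⊗[k] M :=
  TensorProduct.map (LinearMap.mul' k H ∘ₗ (TensorProduct.comm k H H).toLinearMap) LinearMap.id
    ∘ₗ (TensorProduct.assoc k H H M).symm.toLinearMap
    ∘ₗ TensorProduct.map LinearMap.id (coact ∘ₗ act)
    ∘ₗ (TensorProduct.assoc k H H M).toLinearMap
    ∘ₗ TensorProduct.map (TensorProduct.comm k H H).toLinearMap LinearMap.id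

lemma restL_comul (act : H ⊗[k] M →ₗ[k] M) (coact : M →ₗ[k] H ⊗[k] M) :
    restL act coact ∘ₗ TensorProduct.map (Coalgebra.comul : H →ₗ[k] H ⊗[k] H) LinearMap.id
      = ydLHS act coact := by
  apply TensorProduct.ext'
  intro h m
  simp [restL, ydLHS]

lemma restR_comul (act : H ⊗[k] M →ₗ[k] M) (coact : M →ₗ[k] H ⊗[k] M) :
    restR act coact ∘ₗ TensorProduct.map (Coalgebra.comul : H →ₗ[k] H ⊗[k] H) LinearMap.id
      = ydRHS act coact := rfl

/-- `((c ⊗ m') ⊗ n) ↦ Σ (F(c ⊗ n))₁ ⊗ ((F(c ⊗ n))₂ ⊗ m')`. -/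
noncomputable def Lam (F : (H ⊗[k] H) ⊗[k] N →ₗ[k] H ⊗[k] N) :
    ((H ⊗[k] H) ⊗[k] M) ⊗[k] N →ₗ[k] H ⊗[k] (N ⊗[k] M) :=
  (TensorProduct.assoc k H N M).toLinearMap
    ∘ₗ TensorProduct.map F LinearMap.id
    ∘ₗ (TensorProduct.assoc k (H ⊗[k] H) N M).symm.toLinearMap
    ∘ₗ TensorProduct.map LinearMap.id (TensorProduct.comm k M N).toLinearMap
    ∘ₗ (TensorProduct.assoc k (H ⊗[k] H) M N).toLinearMap

/-- `(b ⊗ m') ⊗ (c ⊗ n') ↦ a*c ⊗ (b·n' ⊗ m')`. -/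
noncomputable def MidMap (a : H) (actN : H ⊗[k] N →ₗ[k] N) :
    (H ⊗[k] M) ⊗[k] (H ⊗[k] N) →ₗ[k] H ⊗[k] (N ⊗[k] M) :=
  TensorProduct.map (LinearMap.mulLeft k a)
      (TensorProduct.map actN LinearMap.id ∘ₗ (TensorProduct.assoc k H N M).symm.toLinearMap)
    ∘ₗ (TensorProduct.assoc k H H (N ⊗[k] M)).toLinearMap
    ∘ₗ TensorProduct.map (TensorProduct.comm k H H).toLinearMap
        (TensorProduct.comm k M N).toLinearMap
    ∘ₗ (TensorProduct.tensorTensorTensorComm k H M H N).toLinearMap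

end YDaux

/- STATEMENT 6: For Yetter–Drinfel'd modules `M, N` over a Hopf algebra `H`, the braiding
`σ_{M,N}(m ⊗ n) = m₍₋₁₎·n ⊗ m₍₀₎` is a morphism of Yetter–Drinfel'd modules: it is left
`H`-linear and left `H`-colinear for the tensor product structures. -/
set_option maxHeartbeats 2000000

theorem stmt_6 {k H M N : Type u} [Field k] [Ring H] [HopfAlgebra k H]
    [AddCommGroup M] [Module k M] [AddCommGroup N] [Module k N]
    (actM : H ⊗[k] M →ₗ[k] M) (coactM : M →ₗ[k] H ⊗[k] M)
    (actN : H ⊗[k] N →ₗ[k] N) (coactN : N →ₗ[k] H ⊗[k] N)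
    -- `M`, `N` are left `H`-modules:
    (hactM1 : ∀ m : M, actM ((1 : H) ⊗ₜ m) = m)
    (hactM2 : ∀ (g h : H) (m : M), actM ((g * h) ⊗ₜ m) = actM (g ⊗ₜ actM (h ⊗ₜ m)))
    (hactN1 : ∀ n : N, actN ((1 : H) ⊗ₜ n) = n)
    (hactN2 : ∀ (g h : H) (n : N), actN ((g * h) ⊗ₜ n) = actN (g ⊗ₜ actN (h ⊗ₜ n)))
    -- `M`, `N` are left `H`-comodules:
    (hcoM1 : TensorProduct.map (Coalgebra.comul : H →ₗ[k] H ⊗[k] H) LinearMap.id ∘ₗ coactM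
      = (TensorProduct.assoc k H H M).symm.toLinearMap
          ∘ₗ TensorProduct.map LinearMap.id coactM ∘ₗ coactM)
    (hcoM2 : (TensorProduct.lid k M).toLinearMap
        ∘ₗ TensorProduct.map (Coalgebra.counit : H →ₗ[k] k) LinearMap.id ∘ₗ coactM
      = LinearMap.id)
    (hcoN1 : TensorProduct.map (Coalgebra.comul : H →ₗ[k] H ⊗[k] H) LinearMap.id ∘ₗ coactN
      = (TensorProduct.assoc k H H N).symm.toLinearMap
          ∘ₗ TensorProduct.map LinearMap.id coactN ∘ₗ coactN)
    (hcoN2 : (TensorProduct.lid k N).toLinearMap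
        ∘ₗ TensorProduct.map (Coalgebra.counit : H →ₗ[k] k) LinearMap.id ∘ₗ coactN
      = LinearMap.id)
    -- `M`, `N` satisfy the Yetter–Drinfel'd compatibility condition:
    (hydM : ydLHS actM coactM = ydRHS actM coactM)
    (hydN : ydLHS actN coactN = ydRHS actN coactN) :
    -- the braiding is left `H`-linear …
    (ydBraiding coactM actN ∘ₗ actTensor actM actN
      = actTensor actN actM ∘ₗ TensorProduct.map LinearMap.id (ydBraiding coactM actN)) ∧
    -- … and left `H`-colinear:
    (coactTensor coactN coactM ∘ₗ ydBraiding coactM actN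
      = TensorProduct.map LinearMap.id (ydBraiding coactM actN)
          ∘ₗ coactTensor coactM coactN) := by
  constructor
  · -- H-linearity
    apply TensorProduct.ext'
    intro h mn
    induction mn using TensorProduct.induction_on with
    | zero => simp
    | add x y hx hy =>
      simp only [LinearMap.comp_apply] at hx hy ⊢
      simp only [tmul_add, map_add, hx, hy]
    | tmul m n =>
      have hA : ∀ c : H ⊗[k] H,
          ydBraiding coactM actN (TensorProduct.map actM actN
            ((TensorProduct.tensorTensorTensorComm k H H M N) (c ⊗ₜ (m ⊗ₜ n))))
          = YDaux.Phi actN (YDaux.restR actM coactM (c ⊗ₜ m) ⊗ₜ n) := by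
        intro c
        induction c using TensorProduct.induction_on with
        | zero => simp
        | add x y hx hy => simp only [add_tmul, map_add, hx, hy]
        | tmul g h' =>
          simp only [ydBraiding, YDaux.restR, YDaux.Phi, LinearMap.comp_apply,
            LinearEquiv.coe_coe, tensorTensorTensorComm_tmul, map_tmul,
            LinearMap.id_coe, id_eq, comm_tmul, assoc_tmul, assoc_symm_tmul]
          generalize coactM (actM (g ⊗ₜ[k] m)) = v
          induction v using TensorProduct.induction_on with
          | zero => simp
          | add x y hx hy => simp only [add_tmul, tmul_add, map_add, hx, hy]
          | tmul a m'' =>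
            simp [hactN2]
      have hB : ∀ (c : H ⊗[k] H) (u : H ⊗[k] M),
          TensorProduct.map actN actM ((TensorProduct.tensorTensorTensorComm k H H N M)
            (c ⊗ₜ (TensorProduct.map actN LinearMap.id
              ((TensorProduct.assoc k H N M).symm
                ((TensorProduct.map LinearMap.id (TensorProduct.comm k M N).toLinearMap)
                  ((TensorProduct.assoc k H M N) (u ⊗ₜ n)))))))
          = YDaux.Phi actN ((TensorProduct.map (LinearMap.mul' k H) actM
              ((TensorProduct.tensorTensorTensorComm k H H H M) (c ⊗ₜ u))) ⊗ₜ n) := by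
        intro c u
        induction c using TensorProduct.induction_on with
        | zero => simp
        | add x y hx hy => simp only [add_tmul, map_add, hx, hy]
        | tmul g h' =>
          induction u using TensorProduct.induction_on with
          | zero => simp
          | add x y hx hy => simp only [add_tmul, tmul_add, map_add, hx, hy]
          | tmul a m' =>
            simp [YDaux.Phi, hactN2]
      have key : YDaux.restR actM coactM ((Coalgebra.comul : H →ₗ[k] H ⊗[k] H) h ⊗ₜ m)
          = TensorProduct.map (LinearMap.mul' k H) actM
              ((TensorProduct.tensorTensorTensorComm k H H H M)
                (((Coalgebra.comul : H →ₗ[k] H ⊗[k] H) h) ⊗ₜ coactM m)) := by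
        have e1 : YDaux.restR actM coactM ((Coalgebra.comul : H →ₗ[k] H ⊗[k] H) h ⊗ₜ m)
            = ydRHS actM coactM (h ⊗ₜ m) := by
          rw [← YDaux.restR_comul]; simp
        have e2 : YDaux.restL actM coactM ((Coalgebra.comul : H →ₗ[k] H ⊗[k] H) h ⊗ₜ m)
            = ydLHS actM coactM (h ⊗ₜ m) := by
          rw [← YDaux.restL_comul]; simp
        rw [e1, ← hydM, ← e2]
        simp [YDaux.restL]
      have hσ : ydBraiding coactM actN (m ⊗ₜ n)
          = TensorProduct.map actN LinearMap.id
              ((TensorProduct.assoc k H N M).symm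
                ((TensorProduct.map LinearMap.id (TensorProduct.comm k M N).toLinearMap)
                  ((TensorProduct.assoc k H M N) (coactM m ⊗ₜ n)))) := by
        simp only [ydBraiding, LinearMap.comp_apply, map_tmul,
          LinearMap.id_coe, id_eq, LinearEquiv.coe_coe]
      simp only [LinearMap.comp_apply, actTensor, map_tmul,
        LinearEquiv.coe_coe, LinearMap.id_coe, id_eq]
      rw [hσ, hA ((Coalgebra.comul : H →ₗ[k] H ⊗[k] H) h),
        hB ((Coalgebra.comul : H →ₗ[k] H ⊗[k] H) h) (coactM m), key]
  · -- H-colinearity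
    apply TensorProduct.ext'
    intro m n
    have hC : ∀ u : H ⊗[k] M,
        coactTensor coactN coactM (TensorProduct.map actN LinearMap.id
          ((TensorProduct.assoc k H N M).symm
            ((TensorProduct.map LinearMap.id (TensorProduct.comm k M N).toLinearMap)
              ((TensorProduct.assoc k H M N) (u ⊗ₜ n)))))
        = YDaux.Lam (YDaux.restR actN coactN)
            (((TensorProduct.assoc k H H M).symm
              ((TensorProduct.map LinearMap.id coactM) u)) ⊗ₜ n) := by
      intro u
      induction u using TensorProduct.induction_on with
      | zero => simp
      | add x y hx hy => simp only [add_tmul, map_add, hx, hy]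
      | tmul a m' =>
        simp only [coactTensor, YDaux.Lam, YDaux.restR, LinearMap.comp_apply,
          LinearEquiv.coe_coe, map_tmul, LinearMap.id_coe, id_eq,
          assoc_tmul, assoc_symm_tmul, comm_tmul]
        generalize coactM m' = v
        induction v using TensorProduct.induction_on with
        | zero => simp
        | add x y hx hy => simp only [add_tmul, tmul_add, map_add, hx, hy]
        | tmul b m'' =>
          simp only [assoc_tmul, assoc_symm_tmul, comm_tmul, map_tmul,
            LinearMap.id_coe, id_eq, LinearMap.comp_apply, LinearEquiv.coe_coe]
          generalize coactN (actN (a ⊗ₜ[k] n)) = w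
          induction w using TensorProduct.induction_on with
          | zero => simp
          | add x y hx hy => simp only [add_tmul, tmul_add, map_add, hx, hy]
          | tmul c n' => simp
    have hD : ∀ u : H ⊗[k] M,
        TensorProduct.map LinearMap.id (ydBraiding coactM actN)
          (TensorProduct.map (LinearMap.mul' k H) LinearMap.id
            ((TensorProduct.tensorTensorTensorComm k H M H N) (u ⊗ₜ coactN n)))
        = YDaux.Lam (YDaux.restL actN coactN)
            (((TensorProduct.assoc k H H M).symm
              ((TensorProduct.map LinearMap.id coactM) u)) ⊗ₜ n) := by
      intro u
      induction u using TensorProduct.induction_on with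
      | zero => simp
      | add x y hx hy => simp only [add_tmul, map_add, hx, hy]
      | tmul a m' =>
        have hD3 : ∀ v : H ⊗[k] M,
            YDaux.Lam (YDaux.restL actN coactN)
              (((TensorProduct.assoc k H H M).symm (a ⊗ₜ v)) ⊗ₜ n)
            = YDaux.MidMap a actN (v ⊗ₜ coactN n) := by
          intro v
          induction v using TensorProduct.induction_on with
          | zero => simp
          | add x y hx hy => simp only [add_tmul, tmul_add, map_add, hx, hy]
          | tmul b m'' =>
            simp only [YDaux.Lam, YDaux.restL, YDaux.MidMap, LinearMap.comp_apply,
              LinearEquiv.coe_coe, map_tmul, LinearMap.id_coe, id_eq,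
              assoc_tmul, assoc_symm_tmul, comm_tmul]
            generalize coactN n = w
            induction w using TensorProduct.induction_on with
            | zero => simp
            | add x y hx hy => simp only [add_tmul, tmul_add, map_add, hx, hy]
            | tmul c n' => simp [hactN2]
        have hD2 : ∀ w : H ⊗[k] N,
            TensorProduct.map LinearMap.id (ydBraiding coactM actN)
              (TensorProduct.map (LinearMap.mul' k H) LinearMap.id
                ((TensorProduct.tensorTensorTensorComm k H M H N) ((a ⊗ₜ m') ⊗ₜ w)))
            = YDaux.MidMap a actN (coactM m' ⊗ₜ w) := by
          intro w
          induction w using TensorProduct.induction_on with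
          | zero => simp
          | add x y hx hy => simp only [add_tmul, tmul_add, map_add, hx, hy]
          | tmul c n' =>
            simp only [ydBraiding, YDaux.MidMap, LinearMap.comp_apply,
              LinearEquiv.coe_coe, map_tmul, LinearMap.id_coe, id_eq,
              tensorTensorTensorComm_tmul, LinearMap.mul'_apply]
            generalize coactM m' = v
            induction v using TensorProduct.induction_on with
            | zero => simp
            | add x y hx hy => simp only [add_tmul, tmul_add, map_add, hx, hy]
            | tmul b m'' => simp [mul_comm]
        simp only [map_tmul, LinearMap.id_coe, id_eq]
        rw [hD2 (coactN n), hD3 (coactM m')]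
    have hσ : ydBraiding coactM actN (m ⊗ₜ n)
        = TensorProduct.map actN LinearMap.id
            ((TensorProduct.assoc k H N M).symm
              ((TensorProduct.map LinearMap.id (TensorProduct.comm k M N).toLinearMap)
                ((TensorProduct.assoc k H M N) (coactM m ⊗ₜ n)))) := by
      simp only [ydBraiding, LinearMap.comp_apply, map_tmul,
        LinearMap.id_coe, id_eq, LinearEquiv.coe_coe]
    have hco : coactTensor coactM coactN (m ⊗ₜ n)
        = TensorProduct.map (LinearMap.mul' k H) LinearMap.id
            ((TensorProduct.tensorTensorTensorComm k H M H N) (coactM m ⊗ₜ coactN n)) := by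
      simp only [coactTensor, LinearMap.comp_apply, map_tmul,
        LinearMap.id_coe, id_eq, LinearEquiv.coe_coe]
    simp only [LinearMap.comp_apply]
    rw [hσ, hco, hC (coactM m), hD (coactM m)]
    have hW : (TensorProduct.assoc k H H M).symm
          ((TensorProduct.map LinearMap.id coactM) (coactM m))
        = TensorProduct.map (Coalgebra.comul : H →ₗ[k] H ⊗[k] H) LinearMap.id (coactM m) := by
      have := LinearMap.congr_fun hcoM1 m
      simp only [LinearMap.comp_apply, LinearEquiv.coe_coe] at this
      exact this.symm
    rw [hW]
    have bridge : ∀ u : H ⊗[k] M,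
        YDaux.Lam (YDaux.restR actN coactN)
          ((TensorProduct.map (Coalgebra.comul : H →ₗ[k] H ⊗[k] H) LinearMap.id u) ⊗ₜ n)
        = YDaux.Lam (YDaux.restL actN coactN)
          ((TensorProduct.map (Coalgebra.comul : H →ₗ[k] H ⊗[k] H) LinearMap.id u) ⊗ₜ n) := by
      intro u
      induction u using TensorProduct.induction_on with
      | zero => simp
      | add x y hx hy => simp only [map_add, add_tmul, hx, hy]
      | tmul a m' =>
        have miniL : ∀ (F : (H ⊗[k] H) ⊗[k] N →ₗ[k] H ⊗[k] N) (c : H ⊗[k] H),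
            YDaux.Lam F ((c ⊗ₜ m') ⊗ₜ n)
            = (TensorProduct.assoc k H N M) ((F (c ⊗ₜ n)) ⊗ₜ m') := by
          intro F c
          induction c using TensorProduct.induction_on with
          | zero => simp
          | add x y hx hy => simp only [add_tmul, map_add, hx, hy]
          | tmul g h' =>
            simp only [YDaux.Lam, LinearMap.comp_apply, LinearEquiv.coe_coe,
              assoc_tmul, assoc_symm_tmul, comm_tmul, map_tmul,
              LinearMap.id_coe, id_eq]
        simp only [map_tmul, LinearMap.id_coe, id_eq]
        rw [miniL, miniL]
        have hrest : YDaux.restR actN coactN ((Coalgebra.comul : H →ₗ[k] H ⊗[k] H) a ⊗ₜ n)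
            = YDaux.restL actN coactN ((Coalgebra.comul : H →ₗ[k] H ⊗[k] H) a ⊗ₜ n) := by
          have e1 := LinearMap.congr_fun (YDaux.restR_comul actN coactN) (a ⊗ₜ[k] n)
          have e2 := LinearMap.congr_fun (YDaux.restL_comul actN coactN) (a ⊗ₜ[k] n)
          simp only [LinearMap.comp_apply, map_tmul, LinearMap.id_coe, id_eq] at e1 e2
          rw [e1, e2, hydN]
        rw [hrest]
    exact bridge (coactM m)
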